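/- Let r < ℓ be positive integers and let H' be an r×ℓ matrix over GF(3) whose columns are h'_1,…,h'_ℓ. For a ∈ GF(3)^r, define f(a) as the number of x ∈ GF(2)^{2ℓ} with H·x = a over GF(3), where H has columns (2h'_1, h'_1, …, 2h'_ℓ, h'_ℓ). Then f(0) ≥ 4^ℓ/3^r + 2·(4/3)^r − 8/3. -/

import Mathlib

/-!
Group the coordinates of `x` into the pairs `(x_{2k}, x_{2k+1})`. The `k`-th pair contributes
`Γ(x_{2k}, x_{2k+1}) h'_k` to `H x`, so `H x = H' y` with `y_k = Γ(x_{2k}, x_{2k+1})`. The map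
`Γ` is onto `GF(3)` and `0` has the two preimages `(0,0)` and `(1,1)`; hence every pair `(T, y)`
with `H' y = 0` and `y` supported in `T` yields its own codeword (put `(0,0)` on the zeros of `y`
in `T` and `(1,1)` off `T`). For fixed `T` such `y` solve at most `r` linear equations in `|T|`
unknowns, so there are at least `3^(|T| - r)` of them, and `f(0) ≥ ∑_j C(ℓ,j) 3^((j - r)⁺)`.

Without the truncation this sum is `4^ℓ / 3^r`; the truncation gains
`∑_{j<r} C(ℓ,j) (1 - 3^(j-r))`, which for `ℓ > r` is at least the same sum with `C(r+1,j)`,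
namely `2^(r+1) + 2 - 4 (4/3)^r`. The bound then reduces to `9·4^r ≤ 3·6^r + 7·3^r`.
-/

/-- The map Γ : GF(2)² → GF(3): (0,0)↦0, (0,1)↦1, (1,0)↦2, (1,1)↦0. -/
def gammaMap (a b : ZMod 2) : ZMod 3 :=
  if a = 0 then (if b = 0 then 0 else 1) else (if b = 0 then 2 else 0)

/-- Embedding of binary entries 0,1 into GF(3). -/
def emb (a : ZMod 2) : ZMod 3 := if a = 0 then 0 else 1

/-- The matrix `H` whose columns are `(2h'_1, h'_1, 2h'_2, h'_2, …)`. -/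
def doubledMatrix {r ℓ : ℕ} (H' : Matrix (Fin r) (Fin ℓ) (ZMod 3)) :
    Matrix (Fin r) (Fin (2 * ℓ)) (ZMod 3) :=
  Matrix.of fun i (j : Fin (2 * ℓ)) =>
    (if (j : ℕ) % 2 = 0 then 2 else 1) *
      H' i ⟨(j : ℕ) / 2, by have := j.isLt; omega⟩

open Finset Matrix

lemma LinearMap.card_le_card_ker_mul_card {R M N : Type*} [Ring R] [AddCommGroup M]
    [AddCommGroup N] [Module R M] [Module R N] [Finite N] (f : M →ₗ[R] N) :
    Nat.card M ≤ Nat.card (ker f) * Nat.card N := by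
  rw [Submodule.card_eq_card_quotient_mul_card (ker f),
    Nat.card_congr (f.quotKerEquivRange).toEquiv]
  exact Nat.mul_le_mul_left _ (Nat.card_le_card_of_injective _ Subtype.val_injective)

lemma Nat.pow_sub_le_of_pow_le_mul {q n m K : ℕ} (hq : 0 < q) (h : q ^ n ≤ K * q ^ m) :
    q ^ (n - m) ≤ K := by
  rcases le_total m n with hmn | hnm
  · rw [← Nat.sub_add_cancel hmn, pow_add] at h
    exact Nat.le_of_mul_le_mul_right h (pow_pos hq m)
  · rw [Nat.sub_eq_zero_of_le hnm, pow_zero]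
    exact Nat.pos_of_mul_pos_right ((pow_pos hq n).trans_le h)

lemma card_pow_sub_le_card_ker_supported {R : Type*} [CommRing R] [Fintype R] {r ℓ : ℕ}
    (A : Matrix (Fin r) (Fin ℓ) R) (T : Finset (Fin ℓ)) :
    Fintype.card R ^ (#T - r) ≤
      Nat.card {y : Fin ℓ → R // A *ᵥ y = 0 ∧ ∀ k ∉ T, y k = 0} := by
  let L := (mulVecLin A).prod
    (LinearMap.funLeft R R fun k : (Tᶜ : Finset (Fin ℓ)) => (k : Fin ℓ))
  have hker : Nat.card (LinearMap.ker L) =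
      Nat.card {y : Fin ℓ → R // A *ᵥ y = 0 ∧ ∀ k ∉ T, y k = 0} := by
    refine Nat.card_congr (Equiv.subtypeEquivRight fun y => ?_)
    simp [L, funext_iff]
  have hcard := L.card_le_card_ker_mul_card
  rw [hker, Nat.card_prod, Nat.card_fun, Nat.card_fun, Nat.card_fun] at hcard
  simp only [Nat.card_eq_fintype_card, Fintype.card_fin, Fintype.card_coe, card_compl] at hcard
  have hR : 0 < Fintype.card R := Fintype.card_pos
  refine Nat.pow_sub_le_of_pow_le_mul hR (Nat.le_of_mul_le_mul_right ?_ (pow_pos hR (ℓ - #T)))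
  have hT : #T ≤ ℓ := by simpa using card_le_univ T
  rwa [← pow_add, Nat.add_sub_cancel' hT, mul_assoc]

lemma pow_mul_sum_choose_mul_pow_sub {b : ℕ} (hb : 0 < b) (r ℓ : ℕ) :
    b ^ r * ∑ j ∈ range (ℓ + 1), ℓ.choose j * b ^ (j - r) =
      (b + 1) ^ ℓ + ∑ j ∈ range (ℓ + 1), ℓ.choose j * (b ^ r - b ^ j) := by
  have hterm (j : ℕ) : b ^ r * b ^ (j - r) = b ^ j + (b ^ r - b ^ j) := by
    rw [← pow_add, add_tsub_eq_max, add_tsub_eq_max, max_comm, (pow_right_mono₀ hb).map_max]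
  rw [add_pow, mul_sum, ← sum_add_distrib]
  refine sum_congr rfl fun j _ => ?_
  rw [one_pow, mul_one, Nat.cast_id, mul_left_comm, hterm]
  ring

def pairIndex (ℓ : ℕ) : Fin ℓ × Fin 2 ≃ Fin (2 * ℓ) :=
  finProdFinEquiv.trans (finCongr (Nat.mul_comm ℓ 2))

lemma pairIndex_val {ℓ : ℕ} (k : Fin ℓ) (a : Fin 2) :
    (pairIndex ℓ (k, a) : ℕ) = a + 2 * k := rfl

lemma doubledMatrix_apply_pairIndex {r ℓ : ℕ} (H' : Matrix (Fin r) (Fin ℓ) (ZMod 3))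
    (i : Fin r) (k : Fin ℓ) (a : Fin 2) :
    doubledMatrix H' i (pairIndex ℓ (k, a)) = (if a = 0 then 2 else 1) * H' i k := by
  rw [doubledMatrix, of_apply]
  congr 1
  · fin_cases a <;> simp [pairIndex_val]
  · congr 1
    ext
    simp only [pairIndex_val]
    omega

lemma gammaMap_eq (a b : ZMod 2) : gammaMap a b = 2 * emb a + emb b := by
  revert a b; decide

def pairGamma {ℓ : ℕ} (x : Fin (2 * ℓ) → ZMod 2) (k : Fin ℓ) : ZMod 3 :=
  gammaMap (x (pairIndex ℓ (k, 0))) (x (pairIndex ℓ (k, 1)))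

lemma doubledMatrix_mulVec_emb {r ℓ : ℕ} (H' : Matrix (Fin r) (Fin ℓ) (ZMod 3))
    (x : Fin (2 * ℓ) → ZMod 2) :
    doubledMatrix H' *ᵥ (fun j => emb (x j)) = H' *ᵥ pairGamma x := by
  funext i
  simp only [mulVec, dotProduct]
  rw [← (pairIndex ℓ).sum_comp, Fintype.sum_prod_type]
  refine sum_congr rfl fun k _ => ?_
  simp only [Fin.sum_univ_two, doubledMatrix_apply_pairIndex, pairGamma, gammaMap_eq]
  simp only [Fin.isValue, ↓reduceIte, one_ne_zero]
  ring

def gammaSection (c : ZMod 3) (s : Bool) : Fin 2 → ZMod 2 :=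
  if c = 1 then ![0, 1] else if c = 2 then ![1, 0] else if s then ![0, 0] else ![1, 1]

lemma gammaMap_gammaSection (c : ZMod 3) (s : Bool) :
    gammaMap (gammaSection c s 0) (gammaSection c s 1) = c := by
  revert c s; decide

lemma gammaSection_eq_one_one_iff (c : ZMod 3) (s : Bool) :
    (gammaSection c s 0 = 1 ∧ gammaSection c s 1 = 1) ↔ (s = false ∧ c = 0) := by
  revert c s; decide

def interleave {ℓ : ℕ} (T : Finset (Fin ℓ)) (y : Fin ℓ → ZMod 3) :
    Fin (2 * ℓ) → ZMod 2 :=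
  fun j => gammaSection (y ((pairIndex ℓ).symm j).1) (decide (((pairIndex ℓ).symm j).1 ∈ T))
    ((pairIndex ℓ).symm j).2

lemma interleave_pairIndex {ℓ : ℕ} (T : Finset (Fin ℓ)) (y : Fin ℓ → ZMod 3)
    (k : Fin ℓ) (a : Fin 2) :
    interleave T y (pairIndex ℓ (k, a)) = gammaSection (y k) (decide (k ∈ T)) a := by
  simp [interleave]

lemma pairGamma_interleave {ℓ : ℕ} (T : Finset (Fin ℓ)) (y : Fin ℓ → ZMod 3) :
    pairGamma (interleave T y) = y := by
  ext k
  simp only [pairGamma, interleave_pairIndex, gammaMap_gammaSection]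

lemma mem_iff_interleave {ℓ : ℕ} {T : Finset (Fin ℓ)} {y : Fin ℓ → ZMod 3}
    (hy : ∀ k ∉ T, y k = 0) (k : Fin ℓ) :
    k ∈ T ↔ ¬(interleave T y (pairIndex ℓ (k, 0)) = 1 ∧
      interleave T y (pairIndex ℓ (k, 1)) = 1) := by
  simp only [interleave_pairIndex, gammaSection_eq_one_one_iff, decide_eq_false_iff_not,
    not_and]
  exact ⟨fun h h' => absurd h h', fun h => by_contra fun h' => h h' (hy k h')⟩

lemma interleave_injective {ℓ : ℕ} {T T' : Finset (Fin ℓ)} {y y' : Fin ℓ → ZMod 3}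
    (hy : ∀ k ∉ T, y k = 0) (hy' : ∀ k ∉ T', y' k = 0)
    (h : interleave T y = interleave T' y') :
    T = T' ∧ y = y' := by
  refine ⟨?_, by rw [← pairGamma_interleave T y, h, pairGamma_interleave]⟩
  ext k
  rw [mem_iff_interleave hy, mem_iff_interleave hy', h]

lemma sum_choose_mul_three_pow_sub_le_card {r ℓ : ℕ} (H' : Matrix (Fin r) (Fin ℓ) (ZMod 3)) :
    ∑ j ∈ range (ℓ + 1), ℓ.choose j * 3 ^ (j - r) ≤
      Nat.card {x : Fin (2 * ℓ) → ZMod 2 | doubledMatrix H' *ᵥ (fun j => emb (x j)) = 0} :=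
  calc ∑ j ∈ range (ℓ + 1), ℓ.choose j * 3 ^ (j - r)
      = ∑ T : Finset (Fin ℓ), 3 ^ (#T - r) := by
        rw [← powerset_univ, sum_powerset_apply_card fun j => 3 ^ (j - r), card_univ,
          Fintype.card_fin]
        rfl
    _ ≤ ∑ T : Finset (Fin ℓ), Nat.card {y // H' *ᵥ y = 0 ∧ ∀ k ∉ T, y k = 0} :=
        sum_le_sum fun T _ => by simpa using card_pow_sub_le_card_ker_supported H' T
    _ = Nat.card (Σ T : Finset (Fin ℓ), {y // H' *ᵥ y = 0 ∧ ∀ k ∉ T, y k = 0}) :=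
        Nat.card_sigma.symm
    _ ≤ _ := by
      refine Nat.card_le_card_of_injective (fun p => ⟨interleave p.1 p.2, ?_⟩) ?_
      · simp [doubledMatrix_mulVec_emb, pairGamma_interleave, p.2.2.1]
      · rintro ⟨T, y, hy⟩ ⟨T', y', hy'⟩ h
        obtain ⟨rfl, rfl⟩ := interleave_injective hy.2 hy'.2 (congrArg Subtype.val h)
        rfl

lemma sum_range_choose_succ_mul_three_pow_sub (r : ℕ) :
    ∑ j ∈ range r, (r + 1).choose j * (3 ^ r - 3 ^ j) + 4 * 4 ^ r = 2 * 6 ^ r + 2 * 3 ^ r := by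
  have hcast : ((∑ j ∈ range r, (r + 1).choose j * (3 ^ r - 3 ^ j) : ℕ) : ℤ) =
      ∑ j ∈ range r, ((r + 1).choose j : ℤ) * (3 ^ r - 3 ^ j) := by
    push_cast
    refine sum_congr rfl fun j hj => ?_
    rw [Nat.cast_sub (Nat.pow_le_pow_right (by norm_num) (mem_range.1 hj).le)]
    push_cast
    rfl
  have h4 := add_pow (3 : ℤ) 1 (r + 1)
  have h2 := add_pow (1 : ℤ) 1 (r + 1)
  simp only [sum_range_succ, one_pow, mul_one, one_mul, Nat.choose_self,
    Nat.choose_succ_self_right] at h4 h2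
  have hsplit : ∑ j ∈ range r, ((r + 1).choose j : ℤ) * (3 ^ r - 3 ^ j) =
      (∑ j ∈ range r, ((r + 1).choose j : ℤ)) * 3 ^ r -
        ∑ j ∈ range r, 3 ^ j * ((r + 1).choose j : ℤ) := by
    rw [sum_mul, ← sum_sub_distrib]
    exact sum_congr rfl fun j _ => by ring
  have h6 : (6 : ℤ) ^ r = 2 ^ r * 3 ^ r := by rw [← mul_pow]; norm_num
  suffices hZ : ((∑ j ∈ range r, (r + 1).choose j * (3 ^ r - 3 ^ j) : ℕ) : ℤ) + 4 * 4 ^ r =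
      2 * 6 ^ r + 2 * 3 ^ r by exact_mod_cast hZ
  rw [hcast, hsplit, h6]
  linear_combination h4 - 3 ^ r * h2

lemma nine_mul_four_pow_le (r : ℕ) : 9 * 4 ^ r ≤ 3 * 6 ^ r + 7 * 3 ^ r := by
  rcases r with _ | r
  · norm_num
  induction r with
  | zero => norm_num
  | succ n ih =>
    have h : 2 * 3 ^ (n + 1) ≤ 6 ^ (n + 1) := by
      rw [show 6 = 2 * 3 from rfl, mul_pow]
      exact Nat.mul_le_mul_right _ (Nat.le_self_pow (by omega) 2)
    have h3 : 0 < 3 ^ (n + 1) := by positivity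
    rw [pow_succ 4, pow_succ 6, pow_succ 3]
    linarith

lemma le_sum_choose_mul_three_pow_sub {r ℓ : ℕ} (hrl : r < ℓ) :
    (4 : ℚ) ^ ℓ / 3 ^ r + 2 * (4 / 3) ^ r - 8 / 3 ≤
      ((∑ j ∈ range (ℓ + 1), ℓ.choose j * 3 ^ (j - r) : ℕ) : ℚ) := by
  have hN := pow_mul_sum_choose_mul_pow_sub (b := 3) (by norm_num) r ℓ
  set N := ∑ j ∈ range (ℓ + 1), ℓ.choose j * 3 ^ (j - r)
  have hD : ∑ j ∈ range r, (r + 1).choose j * (3 ^ r - 3 ^ j) ≤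
      ∑ j ∈ range (ℓ + 1), ℓ.choose j * (3 ^ r - 3 ^ j) :=
    (sum_le_sum fun j _ => Nat.mul_le_mul_right _ (Nat.choose_le_choose j hrl)).trans
      (sum_le_sum_of_subset_of_nonneg (range_mono (by omega)) fun _ _ _ => Nat.zero_le _)
  have hE := sum_range_choose_succ_mul_three_pow_sub r
  have h9 := nine_mul_four_pow_le r
  have key : 3 * 4 ^ ℓ + 6 * 4 ^ r ≤ 3 * 3 ^ r * N + 8 * 3 ^ r := by
    simp only [Nat.reduceAdd] at hN
    linarith
  have key' : (3 : ℚ) * 4 ^ ℓ + 6 * 4 ^ r ≤ 3 * 3 ^ r * N + 8 * 3 ^ r := by exact_mod_cast key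
  rw [div_pow, show (4 : ℚ) ^ ℓ / 3 ^ r + 2 * (4 ^ r / 3 ^ r) - 8 / 3 =
    (3 * 4 ^ ℓ + 6 * 4 ^ r - 8 * 3 ^ r) / (3 * 3 ^ r) by field_simp; ring,
    div_le_iff₀ (by positivity)]
  linarith

theorem stmt19 {r ℓ : ℕ} (hrl : r < ℓ)
    (H' : Matrix (Fin r) (Fin ℓ) (ZMod 3)) :
    (4 : ℚ) ^ ℓ / 3 ^ r + 2 * (4 / 3) ^ r - 8 / 3 ≤
      (Nat.card {x : Fin (2 * ℓ) → ZMod 2 |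
        (doubledMatrix H').mulVec (fun j => emb (x j)) = 0} : ℚ) :=
  (le_sum_choose_mul_three_pow_sub hrl).trans
    (by exact_mod_cast sum_choose_mul_three_pow_sub_le_card H')
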